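/- Let Y be any real-valued stochastic process on [0, s] with continuous sample paths such that Y_0 = 0 almost surely and, for each t ∈ (0, s], the law of Y_t is the centered Gaussian measure of variance t. Then E[exp(∫_0^s Y_t dt)] ≤ exp(2s³/9). -/

import Mathlib

/-!
Reparametrize time by `t = φ(u) = s u^{2/3}`, `u ∈ (0, 1]`. Then `∫₀ˢ Y_t dt = ∫₀¹ φ'(u) Y_{φ(u)} du`
is an average for the uniform probability on `(0, 1]`, so Jensen's inequality for `exp` and
Tonelli give `E exp(∫₀ˢ Y_t dt) ≤ ∫₀¹ E exp(φ'(u) Y_{φ(u)}) du = ∫₀¹ exp(φ'(u)² φ(u) / 2) du`,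
using only the one-time marginals `N(0, φ(u))`. The exponent `2/3` is the one for which
`φ'(u)² φ(u) = 4s³/9` is constant, and the bound becomes `exp(2s³/9)`.
-/

open MeasureTheory Filter Set ProbabilityTheory

section MulRpow

variable {c p : ℝ}

lemma image_mul_rpow_Ioc_zero_one (hc : 0 < c) (hp : 0 < p) :
    (fun x : ℝ => c * x ^ p) '' Ioc 0 1 = Ioc 0 c := by
  ext y
  constructor
  · rintro ⟨x, hx, rfl⟩
    exact ⟨by have := Real.rpow_pos_of_pos hx.1 p; positivity,
      mul_le_of_le_one_right hc.le (Real.rpow_le_one hx.1.le hx.2 hp.le)⟩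
  · rintro ⟨hy0, hyc⟩
    have hyc' : 0 < y / c := div_pos hy0 hc
    refine ⟨(y / c) ^ p⁻¹, ⟨Real.rpow_pos_of_pos hyc' _,
      Real.rpow_le_one hyc'.le ((div_le_one hc).2 hyc) (inv_nonneg.2 hp.le)⟩, ?_⟩
    change c * ((y / c) ^ p⁻¹) ^ p = y
    rw [← Real.rpow_mul hyc'.le, inv_mul_cancel₀ hp.ne', Real.rpow_one, mul_div_cancel₀ _ hc.ne']

lemma injOn_mul_rpow_Ioc_zero_one (hc : 0 < c) (hp : 0 < p) :
    InjOn (fun x : ℝ => c * x ^ p) (Ioc 0 1) := fun _ hx _ hy hxy =>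
  Real.rpow_left_injOn hp.ne' hx.1.le hy.1.le (mul_left_cancel₀ hc.ne' hxy)

lemma hasDerivWithinAt_mul_rpow {x : ℝ} (hx : 0 < x) (s : Set ℝ) :
    HasDerivWithinAt (fun x : ℝ => c * x ^ p) (c * p * x ^ (p - 1)) s x := by
  simpa [mul_assoc] using
    ((Real.hasDerivAt_rpow_const (p := p) (Or.inl hx.ne')).const_mul c).hasDerivWithinAt

variable {E : Type*} [NormedAddCommGroup E] [NormedSpace ℝ E]

lemma eqOn_abs_deriv_mul_rpow_smul (hc : 0 < c) (hp : 0 < p) (g : ℝ → E) :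
    EqOn (fun x => |c * p * x ^ (p - 1)| • g (c * x ^ p))
      (fun x => (c * p * x ^ (p - 1)) • g (c * x ^ p)) (Ioc 0 1) := fun x hx => by
  have := Real.rpow_pos_of_pos hx.1 (p - 1)
  simp only [abs_of_pos (by positivity : 0 < c * p * x ^ (p - 1))]

theorem integral_Ioc_comp_mul_rpow (hc : 0 < c) (hp : 0 < p) (g : ℝ → E) :
    ∫ x in Ioc 0 1, (c * p * x ^ (p - 1)) • g (c * x ^ p) = ∫ y in Ioc 0 c, g y := by
  rw [← image_mul_rpow_Ioc_zero_one hc hp, integral_image_eq_integral_abs_deriv_smul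
    measurableSet_Ioc (fun x hx => hasDerivWithinAt_mul_rpow hx.1 _)
    (injOn_mul_rpow_Ioc_zero_one hc hp)]
  exact (setIntegral_congr_fun measurableSet_Ioc (eqOn_abs_deriv_mul_rpow_smul hc hp g)).symm

theorem integrableOn_Ioc_comp_mul_rpow_iff (hc : 0 < c) (hp : 0 < p) (g : ℝ → E) :
    IntegrableOn (fun x => (c * p * x ^ (p - 1)) • g (c * x ^ p)) (Ioc 0 1)
      ↔ IntegrableOn g (Ioc 0 c) := by
  rw [← image_mul_rpow_Ioc_zero_one hc hp, integrableOn_image_iff_integrableOn_abs_deriv_smul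
    measurableSet_Ioc (fun x hx => hasDerivWithinAt_mul_rpow hx.1 _)
    (injOn_mul_rpow_Ioc_zero_one hc hp)]
  exact (integrableOn_congr_fun (eqOn_abs_deriv_mul_rpow_smul hc hp g) measurableSet_Ioc).symm

end MulRpow

lemma integral_le_of_lintegral_ofReal_le {α : Type*} [MeasurableSpace α] {μ : Measure α}
    {f : α → ℝ} (hf : 0 ≤ᵐ[μ] f) {c : ℝ} (hc : 0 ≤ c)
    (h : ∫⁻ x, ENNReal.ofReal (f x) ∂μ ≤ ENNReal.ofReal c) : ∫ x, f x ∂μ ≤ c := by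
  by_cases hfi : Integrable f μ
  · rw [integral_eq_lintegral_of_nonneg_ae hf hfi.aestronglyMeasurable]
    exact ENNReal.toReal_le_of_le_ofReal hc h
  · rwa [integral_undef hfi]

lemma ofReal_exp_integral_le_lintegral {α : Type*} [MeasurableSpace α] {μ : Measure α}
    [IsProbabilityMeasure μ] {f : α → ℝ} (hf : Integrable f μ) :
    ENNReal.ofReal (Real.exp (∫ x, f x ∂μ)) ≤ ∫⁻ x, ENNReal.ofReal (Real.exp (f x)) ∂μ := by
  by_cases hexp : Integrable (fun x => Real.exp (f x)) μ
  · rw [← ofReal_integral_eq_lintegral_ofReal hexp (ae_of_all _ fun _ => (Real.exp_pos _).le)]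
    exact ENNReal.ofReal_le_ofReal <| convexOn_exp.map_integral_le
      Real.continuous_exp.continuousOn isClosed_univ (ae_of_all _ fun _ => mem_univ _) hf hexp
  · have hinf : ¬ HasFiniteIntegral (fun x => Real.exp (f x)) μ := fun h =>
      hexp ⟨(Real.continuous_exp.comp_aestronglyMeasurable hf.1), h⟩
    rw [hasFiniteIntegral_iff_ofReal (ae_of_all _ fun _ => (Real.exp_pos _).le),
      not_lt, top_le_iff] at hinf
    simp [hinf]

lemma lintegral_exp_integral_le_lintegral_lintegral {Ω ι : Type*} [MeasurableSpace Ω]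
    [MeasurableSpace ι] (P : Measure Ω) [SFinite P] (μ : Measure ι) [IsProbabilityMeasure μ]
    {Z : ι → Ω → ℝ} (hZ : Measurable (Function.uncurry Z))
    (hZint : ∀ ω, Integrable (fun u => Z u ω) μ) :
    ∫⁻ ω, ENNReal.ofReal (Real.exp (∫ u, Z u ω ∂μ)) ∂P
      ≤ ∫⁻ u, ∫⁻ ω, ENNReal.ofReal (Real.exp (Z u ω)) ∂P ∂μ := by
  rw [lintegral_lintegral_swap (Real.measurable_exp.comp hZ).ennreal_ofReal.aemeasurable]
  exact lintegral_mono fun ω => ofReal_exp_integral_le_lintegral (hZint ω)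

lemma lintegral_exp_mul_of_map_eq_gaussianReal {Ω : Type*} [MeasurableSpace Ω] {P : Measure Ω}
    {X : Ω → ℝ} (hXm : Measurable X) {v : NNReal} (hX : P.map X = gaussianReal 0 v) (a : ℝ) :
    ∫⁻ ω, ENNReal.ofReal (Real.exp (a * X ω)) ∂P = ENNReal.ofReal (Real.exp (v * a ^ 2 / 2)) := by
  have hint : Integrable (fun ω => Real.exp (a * X ω)) P := by
    have := integrable_exp_mul_gaussianReal (μ := 0) (v := v) a
    rw [← hX] at this
    exact this.comp_measurable hXm
  rw [← ofReal_integral_eq_lintegral_ofReal hint (ae_of_all _ fun _ => (Real.exp_pos _).le)]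
  have := mgf_gaussianReal hX a
  rw [mgf] at this
  simp [this]

noncomputable def timeChange (s u : ℝ) : ℝ := s * u ^ (2 / 3 : ℝ)

noncomputable def timeChangeDeriv (s u : ℝ) : ℝ := s * (2 / 3) * u ^ ((2 / 3 : ℝ) - 1)

lemma timeChangeDeriv_sq_mul_timeChange (s : ℝ) {u : ℝ} (hu : 0 < u) :
    timeChangeDeriv s u ^ 2 * timeChange s u = 4 * s ^ 3 / 9 := by
  calc timeChangeDeriv s u ^ 2 * timeChange s u
      = 4 * s ^ 3 / 9 * ((u ^ ((2 / 3 : ℝ) - 1)) ^ 2 * u ^ (2 / 3 : ℝ)) := by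
        unfold timeChangeDeriv timeChange; ring
    _ = 4 * s ^ 3 / 9 := by
      rw [← Real.rpow_natCast (u ^ _), ← Real.rpow_mul hu.le, ← Real.rpow_add hu]
      norm_num

theorem integral_exp_intervalIntegral_le_of_map_eq_gaussianReal {Ω : Type*} [MeasurableSpace Ω]
    {P : Measure Ω} [IsProbabilityMeasure P] {X : ℝ → Ω → ℝ} {s : ℝ} (hs : 0 < s)
    (hXcont : ∀ ω, Continuous (X · ω)) (hXmeas : ∀ t, Measurable (X t))
    (hXlaw : ∀ t ∈ Ioc 0 s, P.map (X t) = gaussianReal 0 t.toNNReal) :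
    ∫ ω, Real.exp (∫ t in 0..s, X t ω) ∂P ≤ Real.exp (2 * s ^ 3 / 9) := by
  set μ := volume.restrict (Ioc (0 : ℝ) 1)
  have : IsProbabilityMeasure μ := ⟨by simp [μ, Real.volume_Ioc]⟩
  set Z : ℝ → Ω → ℝ := fun u ω => timeChangeDeriv s u * X (timeChange s u) ω
  have hp : (0 : ℝ) < 2 / 3 := by norm_num
  have hZint : ∀ ω, Integrable (Z · ω) μ := fun ω =>
    (integrableOn_Ioc_comp_mul_rpow_iff hs hp _).2
      ((hXcont ω).integrableOn_Icc.mono_set Ioc_subset_Icc_self)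
  have hpath : ∀ ω, ∫ t in 0..s, X t ω = ∫ u, Z u ω ∂μ := fun ω => by
    rw [intervalIntegral.integral_of_le hs.le]
    exact (integral_Ioc_comp_mul_rpow hs hp _).symm
  have hZ : Measurable (Function.uncurry Z) := by
    have hX : Measurable (Function.uncurry X) :=
      measurable_uncurry_of_continuous_of_measurable hXcont hXmeas
    change Measurable fun p : ℝ × Ω => s * (2 / 3) * p.1 ^ ((2 / 3 : ℝ) - 1)
      * Function.uncurry X (s * p.1 ^ (2 / 3 : ℝ), p.2)
    exact ((measurable_fst.pow_const _).const_mul _).mul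
      (hX.comp ((measurable_fst.pow_const _ |>.const_mul _).prodMk measurable_snd))
  have hmarg : ∀ u ∈ Ioc (0 : ℝ) 1,
      ∫⁻ ω, ENNReal.ofReal (Real.exp (Z u ω)) ∂P = ENNReal.ofReal (Real.exp (2 * s ^ 3 / 9)) := by
    intro u hu
    have ht : timeChange s u ∈ Ioc 0 s := image_mul_rpow_Ioc_zero_one hs hp ▸ mem_image_of_mem _ hu
    rw [lintegral_exp_mul_of_map_eq_gaussianReal (hXmeas _) (hXlaw _ ht),
      Real.coe_toNNReal _ ht.1.le, mul_comm, timeChangeDeriv_sq_mul_timeChange s hu.1]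
    ring_nf
  refine integral_le_of_lintegral_ofReal_le (ae_of_all _ fun _ => (Real.exp_pos _).le)
    (Real.exp_pos _).le ?_
  calc ∫⁻ ω, ENNReal.ofReal (Real.exp (∫ t in 0..s, X t ω)) ∂P
      = ∫⁻ ω, ENNReal.ofReal (Real.exp (∫ u, Z u ω ∂μ)) ∂P := by simp_rw [hpath]
    _ ≤ ∫⁻ u, ∫⁻ ω, ENNReal.ofReal (Real.exp (Z u ω)) ∂P ∂μ :=
      lintegral_exp_integral_le_lintegral_lintegral P μ hZ hZint
    _ = ∫⁻ _, ENNReal.ofReal (Real.exp (2 * s ^ 3 / 9)) ∂μ :=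
      setLIntegral_congr_fun measurableSet_Ioc hmarg
    _ = ENNReal.ofReal (Real.exp (2 * s ^ 3 / 9)) := by simp [μ]

theorem statement16_general
    {Ω : Type*} [MeasurableSpace Ω] (P : Measure Ω) [IsProbabilityMeasure P]
    (s : ℝ) (hs : 0 < s)
    (Y : ℝ → Ω → ℝ)
    (hYcont : ∀ ω, ContinuousOn (fun t => Y t ω) (Icc (0:ℝ) s))
    (hYmeas : ∀ t ∈ Icc (0:ℝ) s, Measurable (Y t))
    (hYlaw : ∀ t ∈ Ioc (0:ℝ) s, Measure.map (Y t) P = gaussianReal 0 t.toNNReal) :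
    ∫ ω, Real.exp (∫ t in (0:ℝ)..s, Y t ω) ∂P ≤ Real.exp (2 * s ^ 3 / 9) := by
  set Y' : ℝ → Ω → ℝ := fun t => Y (projIcc 0 s hs.le t)
  have hY' : ∀ t ∈ Icc 0 s, Y' t = Y t := fun t ht => by simp only [Y', projIcc_of_mem hs.le ht]
  calc ∫ ω, Real.exp (∫ t in (0:ℝ)..s, Y t ω) ∂P
      = ∫ ω, Real.exp (∫ t in (0:ℝ)..s, Y' t ω) ∂P := by
        refine integral_congr_ae (ae_of_all _ fun ω => congrArg Real.exp ?_)
        exact intervalIntegral.integral_congr fun t ht =>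
          (congrFun (hY' t (uIcc_of_le hs.le ▸ ht)) ω).symm
    _ ≤ Real.exp (2 * s ^ 3 / 9) :=
      integral_exp_intervalIntegral_le_of_map_eq_gaussianReal hs
        (fun ω => (hYcont ω).comp_continuous (continuous_subtype_val.comp continuous_projIcc)
          fun _ => Subtype.prop _)
        (fun _ => hYmeas _ (Subtype.prop _))
        (fun t ht => hY' t (Ioc_subset_Icc_self ht) ▸ hYlaw t ht)

/-- The rearrangement upper bound applied to the Brownian single-time marginals
(extended, as in the Remark of Section 4.2, to allow the Dirac marginal at `t = 0`):
if `Y` is a real-valued process on `[0, s]` with continuous sample paths, `Y_0 = 0`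
almost surely, and `law(Y_t) = N(0, t)` for each `t ∈ (0, s]`, then
`E[exp(∫₀ˢ Y_t dt)] ≤ exp(2s³/9)`. -/
theorem statement16
    {Ω : Type*} [MeasurableSpace Ω] (P : Measure Ω) [IsProbabilityMeasure P]
    (s : ℝ) (hs : 0 < s)
    (Y : ℝ → Ω → ℝ)
    (hY0 : ∀ᵐ ω ∂P, Y 0 ω = 0)
    (hYcont : ∀ ω, ContinuousOn (fun t => Y t ω) (Icc (0:ℝ) s))
    (hYmeas : ∀ t ∈ Icc (0:ℝ) s, Measurable (Y t))
    (hYlaw : ∀ t ∈ Ioc (0:ℝ) s, Measure.map (Y t) P = gaussianReal 0 t.toNNReal) :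
    ∫ ω, Real.exp (∫ t in (0:ℝ)..s, Y t ω) ∂P ≤ Real.exp (2 * s ^ 3 / 9) :=
  statement16_general P s hs Y hYcont hYmeas hYlaw
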